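/- Fix a k-local property P = P(F) of [n]^d-arrays over Σ, an [n]^d-array A over Σ, and an (n,d,k,w)-system of grids (G_0,...,G_r). Let 0 ≤ i' < i ≤ r. If a G_i-block B is (P,A)-unrepairable, then there exists a (P,A)-unrepairable G_{i'}-block contained in B. -/

import Mathlib

open Finset

/-- `I[:ℓ]`: the set of the `ℓ` smallest elements of `I` (or `I` itself if `|I| < ℓ`). -/
def takeSmallest (I : Finset ℕ) (ℓ : ℕ) : Finset ℕ :=
  I.filter fun x => (I.filter fun y => y ≤ x).card ≤ ℓ

/-- `I[ℓ+1:] = I \ I[:ℓ]`. -/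
def dropSmallest (I : Finset ℕ) (ℓ : ℕ) : Finset ℕ :=
  I \ takeSmallest I ℓ

/-- An `(n,w)`-interval partition: a partition of `[n] = {1,…,n}` into consecutive,
pairwise disjoint intervals `I_1, …, I_t`, each of size `w` or `w+1`, where for `j < j'`
every element of `I j` is smaller than every element of `I j'`. -/
structure IntervalPartition (n w : ℕ) where
  t : ℕ
  I : Fin t → Finset ℕ
  interval : ∀ j, ∃ a b, 1 ≤ a ∧ a ≤ b ∧ b ≤ n ∧ I j = Finset.Icc a b
  size : ∀ j, (I j).card = w ∨ (I j).card = w + 1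
  cover : ∀ x ∈ Finset.Icc 1 n, ∃ j, x ∈ I j
  ordered : ∀ j j' : Fin t, j < j' → ∀ x ∈ I j, ∀ y ∈ I j', x < y

/-- The hypergrid `[n]^d`, as a set of tuples. -/
def cube (n d : ℕ) : Set (Fin d → ℕ) :=
  {x | ∀ i, 1 ≤ x i ∧ x i ≤ n}

/-- The `(n,d,k,w)`-grid induced by an `(n,w)`-interval partition. -/
def gridOf (n d k w : ℕ) (P : IntervalPartition n w) : Set (Fin d → ℕ) :=
  {x ∈ cube n d | ∃ i : Fin d, ∃ j : Fin P.t, x i ∈ takeSmallest (P.I j) (k - 1)}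

/-- `G ∈ 𝒢(n,d,k,w)`: `G` is the grid induced by some `(n,w)`-interval partition. -/
def IsGrid (n d k w : ℕ) (G : Set (Fin d → ℕ)) : Prop :=
  ∃ P : IntervalPartition n w, G = gridOf n d k w P

/-- Two entries of `[n]^d` are neighbors if `∑ i, |x i − y i| = 1`. -/
def Neighbor {d : ℕ} (x y : Fin d → ℕ) : Prop :=
  (∑ i, Nat.dist (x i) (y i)) = 1

/-- A `G`-block: a connected component of the neighborhood graph on `[n]^d \ G`. -/
def IsBlock (n d : ℕ) (G B : Set (Fin d → ℕ)) : Prop :=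
  B.Nonempty ∧ B ⊆ cube n d \ G ∧
    (∀ x ∈ B, ∀ y ∈ B,
      Relation.ReflTransGen
        (fun a b => a ∈ cube n d \ G ∧ b ∈ cube n d \ G ∧ Neighbor a b) x y) ∧
    (∀ x ∈ B, ∀ y, y ∈ cube n d \ G → Neighbor x y → y ∈ B)

/-- The closure `B̄` of a block `B`. -/
def blockClosure (n d k : ℕ) (B : Set (Fin d → ℕ)) : Set (Fin d → ℕ) :=
  {x ∈ cube n d | ∃ y ∈ B, ∀ i, Nat.dist (x i) (y i) < k}

/-- The boundary `∂B = B̄ \ B` of a block `B`. -/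
def blockBoundary (n d k : ℕ) (B : Set (Fin d → ℕ)) : Set (Fin d → ℕ) :=
  blockClosure n d k B \ B

/-- A valid location of a width-`k` subarray in `[n]^d`: an element of `[n−k+1]^d`. -/
def ValidLoc (n d k : ℕ) (a : Fin d → ℕ) : Prop :=
  ∀ i, 1 ≤ a i ∧ a i ≤ n - k + 1

/-- The width-`k` box with lowest corner `a`: `{a_1,…,a_1+k−1} × ⋯ × {a_d,…,a_d+k−1}`. -/
def kbox (d k : ℕ) (a : Fin d → ℕ) : Set (Fin d → ℕ) :=
  {x | ∀ i, a i ≤ x i ∧ x i ≤ a i + k - 1}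

/-- Some forbidden pattern of `F` occurs as a consecutive subarray of `A` at location `a`;
patterns are compared on `[k]^d`. -/
def HasCopyAt {σ : Type*} (d k : ℕ) (F : Set ((Fin d → ℕ) → σ))
    (A : (Fin d → ℕ) → σ) (a : Fin d → ℕ) : Prop :=
  ∃ S ∈ F, ∀ j : Fin d → ℕ, (∀ i, 1 ≤ j i ∧ j i ≤ k) →
    A (fun i => a i + j i - 1) = S j

/-- `A` contains an `F`-copy lying inside the set `X`. -/
def HasCopyIn {σ : Type*} (n d k : ℕ) (F : Set ((Fin d → ℕ) → σ))
    (A : (Fin d → ℕ) → σ) (X : Set (Fin d → ℕ)) : Prop :=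
  ∃ a, ValidLoc n d k a ∧ HasCopyAt d k F A a ∧ kbox d k a ⊆ X

/-- `A` satisfies the `k`-local property `P(F)`: it contains no `F`-copy. -/
def SatisfiesP {σ : Type*} (n d k : ℕ) (F : Set ((Fin d → ℕ) → σ))
    (A : (Fin d → ℕ) → σ) : Prop :=
  ¬ ∃ a, ValidLoc n d k a ∧ HasCopyAt d k F A a

/-- `A` is `ε`-far from `P(F)`: every array satisfying `P(F)` differs from `A`
in at least `ε·n^d` entries of `[n]^d`. -/
def FarFrom {σ : Type*} (n d k : ℕ) (F : Set ((Fin d → ℕ) → σ)) (ε : ℝ)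
    (A : (Fin d → ℕ) → σ) : Prop :=
  ∀ A' : (Fin d → ℕ) → σ, SatisfiesP n d k F A' →
    ε * (n : ℝ) ^ d ≤ ({x | x ∈ cube n d ∧ A x ≠ A' x}).ncard

/-- A block `B` is `(P,A)`-unrepairable: every array agreeing with `A` on `∂B`
(including `A` itself) contains an `F`-copy lying inside `B̄`. -/
def Unrepairable {σ : Type*} (n d k : ℕ) (F : Set ((Fin d → ℕ) → σ))
    (A : (Fin d → ℕ) → σ) (B : Set (Fin d → ℕ)) : Prop :=
  ∀ A' : (Fin d → ℕ) → σ, (∀ x ∈ blockBoundary n d k B, A' x = A x) →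
    HasCopyIn n d k F A' (blockClosure n d k B)

/-- `r = ⌊log₂(n/w)⌋`. -/
def sysR (n w : ℕ) : ℕ := Nat.log 2 (n / w)

/-- An `(n,d,k,w)`-system of grids `(G_0, …, G_r)` with `r = ⌊log₂(n/w)⌋`:
`G_i ∈ 𝒢(n,d,k,⌊n/2^(r−i)⌋)` and `G_0 ⊇ G_1 ⊇ ⋯ ⊇ G_r`. -/
structure GridSystem (n d k w : ℕ) where
  G : ℕ → Set (Fin d → ℕ)
  isGrid : ∀ i ≤ sysR n w, IsGrid n d k (n / 2 ^ (sysR n w - i)) (G i)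
  nested : ∀ i j : ℕ, j ≤ i → i ≤ sysR n w → G i ⊆ G j

/-- A `G_i`-block `B` is a `(P,A)`-witness: either `i = 0` and `A` contains an `F`-copy
inside `B̄`, or `i > 0` and `B` is `(P,A)`-unrepairable. -/
def IsWitness {σ : Type*} (n d k w : ℕ) (S : GridSystem n d k w)
    (F : Set ((Fin d → ℕ) → σ)) (A : (Fin d → ℕ) → σ)
    (i : ℕ) (B : Set (Fin d → ℕ)) : Prop :=
  i ≤ sysR n w ∧ IsBlock n d (S.G i) B ∧
    ((i = 0 ∧ HasCopyIn n d k F A (blockClosure n d k B)) ∨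
      (0 < i ∧ Unrepairable n d k F A B))

/-- A witness is maximal if all of its ancestors (blocks of coarser grids containing it)
are `(P,A)`-repairable. -/
def IsMaximalWitness {σ : Type*} (n d k w : ℕ) (S : GridSystem n d k w)
    (F : Set ((Fin d → ℕ) → σ)) (A : (Fin d → ℕ) → σ)
    (i : ℕ) (B : Set (Fin d → ℕ)) : Prop :=
  IsWitness n d k w S F A i B ∧
    ∀ j, i < j → j ≤ sysR n w → ∀ B', IsBlock n d (S.G j) B' → B ⊆ B' →
      ¬ Unrepairable n d k F A B'

/-- The family `W` of all maximal `(P,A)`-witness blocks. -/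
def MaxWitnessFamily {σ : Type*} (n d k w : ℕ) (S : GridSystem n d k w)
    (F : Set ((Fin d → ℕ) → σ)) (A : (Fin d → ℕ) → σ) :
    Set (Set (Fin d → ℕ)) :=
  {B | ∃ i, IsMaximalWitness n d k w S F A i B}

/-- `Par(B)` for a `G_i`-block `B`: the `G_{i+1}`-block containing `B` if `i < r`
(expressed as the union of all such blocks, of which there is exactly one), and
`[n]^d` for `i = r`. -/
def parentSet (n d k w : ℕ) (S : GridSystem n d k w) (i : ℕ)
    (B : Set (Fin d → ℕ)) : Set (Fin d → ℕ) :=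
  if i = sysR n w then cube n d
  else ⋃₀ {B' | IsBlock n d (S.G (i + 1)) B' ∧ B ⊆ B'}

/-!
The cells of a grid, i.e. the products of the interval parts `I[k:]`, are its blocks, and two
distinct cells are at sup-distance at least `k`; hence a point off the grid that lies in the
closure of a block lies in the block. Since every interval of `G_{i'}` has at least `k`
elements, every width-`k` box meets a cell of `G_{i'}`.

Suppose every `G_{i'}`-block inside `B` had a repair. The sub-blocks are disjoint, so the repairs
glue to one array, which agrees with `A` on `∂B` and thus has an `F`-copy inside `B̄`. Its box
contains a point `z` off `G_{i'} ⊇ G_i`, so `z ∈ B`, and the box lies inside the closure of the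
`G_{i'}`-block `C ∋ z`. On `C̄` the glued array equals the repair of `C`, because `C̄ \ C` meets
no other sub-block: the repair of `C` has an `F`-copy inside `C̄`, a contradiction.
-/

open Relation

variable {n d k w : ℕ}

lemma mem_takeSmallest_Icc {a b ℓ x : ℕ} :
    x ∈ takeSmallest (Finset.Icc a b) ℓ ↔ a ≤ x ∧ x ≤ b ∧ x < a + ℓ := by
  have hfilter : (Finset.Icc a b).filter (· ≤ x) = Finset.Icc a (min b x) := by
    ext z
    simp only [Finset.mem_filter, Finset.mem_Icc]
    omega
  rw [takeSmallest, Finset.mem_filter, hfilter, Nat.card_Icc, Finset.mem_Icc]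
  omega

lemma mem_dropSmallest_Icc {a b ℓ x : ℕ} :
    x ∈ dropSmallest (Finset.Icc a b) ℓ ↔ a + ℓ ≤ x ∧ x ≤ b := by
  rw [dropSmallest, Finset.mem_sdiff, Finset.mem_Icc, mem_takeSmallest_Icc]
  omega

lemma dist_le_one_of_neighbor {x y : Fin d → ℕ} (h : Neighbor x y) (i : Fin d) :
    Nat.dist (x i) (y i) ≤ 1 :=
  h ▸ Finset.single_le_sum (fun j _ => Nat.zero_le (Nat.dist (x j) (y j))) (Finset.mem_univ i)

lemma reflTransGen_of_mem_pi {S : Fin d → Set ℕ} (hS : ∀ i, (S i).OrdConnected)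
    {x y : Fin d → ℕ} (hx : x ∈ Set.univ.pi S) (hy : y ∈ Set.univ.pi S) :
    ReflTransGen (fun a b => a ∈ Set.univ.pi S ∧ b ∈ Set.univ.pi S ∧ Neighbor a b) x y := by
  suffices key : ∀ m, ∀ x ∈ Set.univ.pi S, ∑ i, Nat.dist (x i) (y i) = m →
      ReflTransGen (fun a b => a ∈ Set.univ.pi S ∧ b ∈ Set.univ.pi S ∧ Neighbor a b) x y from
    key _ x hx rfl
  intro m
  induction m with
  | zero =>
    intro x _ hm
    obtain rfl : x = y := funext fun i =>
      Nat.eq_of_dist_eq_zero (Finset.sum_eq_zero_iff.1 hm i (Finset.mem_univ i))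
    exact ReflTransGen.refl
  | succ m ih =>
    intro x hx hm
    obtain ⟨i, hi⟩ : ∃ i, x i ≠ y i := by
      by_contra! h
      simp [funext h] at hm
    set x' := Function.update x i (if x i < y i then x i + 1 else x i - 1) with hx'
    have hx'i : Nat.dist (x i) (x' i) = 1 ∧ Nat.dist (x' i) (y i) + 1 = Nat.dist (x i) (y i) := by
      simp only [hx', Function.update_self, Nat.dist]
      split_ifs <;> omega
    have hx'j : ∀ j ≠ i, x' j = x j := fun j hj => Function.update_of_ne hj _ _
    have hx'_mem : x' ∈ Set.univ.pi S := by
      intro j _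
      by_cases hj : j = i
      · subst hj
        refine (hS j).uIcc_subset (hx j trivial) (hy j trivial) ?_
        rw [Set.mem_uIcc]
        simp only [hx', Function.update_self]
        split_ifs <;> omega
      · exact hx'j j hj ▸ hx j trivial
    have hneighbor : Neighbor x x' := by
      rw [Neighbor, Finset.sum_eq_single i (fun j _ hj => by rw [hx'j j hj, Nat.dist_self])
        (absurd (Finset.mem_univ i))]
      exact hx'i.1
    have hdist : ∑ j, Nat.dist (x' j) (y j) = m := by
      rw [← Finset.add_sum_erase _ _ (Finset.mem_univ i)] at hm ⊢
      rw [Finset.sum_congr rfl fun j hj => by rw [hx'j j (Finset.ne_of_mem_erase hj)]]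
      omega
    exact ReflTransGen.head ⟨hx, hx'_mem, hneighbor⟩ (ih x' hx'_mem hdist)

lemma exists_extend_of_pairwiseDisjoint {α β : Type*} {𝒞 : Set (Set α)}
    (h𝒞 : 𝒞.PairwiseDisjoint id) (f : Set α → α → β) (g : α → β) :
    ∃ h : α → β, (∀ C ∈ 𝒞, ∀ x ∈ C, h x = f C x) ∧ ∀ x, (∀ C ∈ 𝒞, x ∉ C) → h x = g x := by
  classical
  refine ⟨fun x => if hx : ∃ C ∈ 𝒞, x ∈ C then f hx.choose x else g x, ?_, ?_⟩
  · intro C hC x hx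
    have hex : ∃ C ∈ 𝒞, x ∈ C := ⟨C, hC, hx⟩
    dsimp only
    rw [dif_pos hex, h𝒞.elim_set hex.choose_spec.1 hC x hex.choose_spec.2 hx]
  · intro x hx
    dsimp only
    rw [dif_neg fun ⟨C, hC, hxC⟩ => hx C hC hxC]

lemma le_div_two_pow_sysR_sub (hw : 0 < w) (hwn : w ≤ n) (i : ℕ) :
    w ≤ n / 2 ^ (sysR n w - i) := by
  have hr : 2 ^ sysR n w ≤ n / w :=
    Nat.pow_log_le_self 2 (Nat.div_pos hwn hw).ne'
  calc w ≤ n / 2 ^ sysR n w := by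
        rw [Nat.le_div_iff_mul_le (by positivity)]
        calc w * 2 ^ sysR n w ≤ w * (n / w) := Nat.mul_le_mul_left w hr
          _ ≤ n := Nat.mul_div_le n w
    _ ≤ n / 2 ^ (sysR n w - i) :=
        Nat.div_le_div_left (Nat.pow_le_pow_right two_pos (Nat.sub_le _ _)) (by positivity)

section Copies

variable {σ : Type*} {F : Set ((Fin d → ℕ) → σ)}

lemma HasCopyIn.congr {A A' : (Fin d → ℕ) → σ} {X : Set (Fin d → ℕ)}
    (h : HasCopyIn n d k F A X) (hAA' : ∀ x ∈ X, A x = A' x) : HasCopyIn n d k F A' X := by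
  obtain ⟨a, ha, ⟨S, hS, hSA⟩, hbox⟩ := h
  refine ⟨a, ha, ⟨S, hS, fun j hj => ?_⟩, hbox⟩
  rw [← hSA j hj, hAA' _ (hbox fun i => ?_)]
  obtain ⟨hj1, hjk⟩ := hj i
  exact ⟨by omega, by omega⟩

lemma kbox_subset_blockClosure {a z : Fin d → ℕ} {C : Set (Fin d → ℕ)}
    (hbox : kbox d k a ⊆ cube n d) (hz : z ∈ kbox d k a) (hzC : z ∈ C) :
    kbox d k a ⊆ blockClosure n d k C := by
  refine fun x hx => ⟨hbox hx, z, hzC, fun i => ?_⟩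
  have := hx i
  have := hz i
  have := hbox hx i
  simp only [Nat.dist]
  omega

end Copies

namespace IntervalPartition

variable (P : IntervalPartition n w)

lemma eq_of_mem_of_mem {j j' : Fin P.t} {x : ℕ} (h : x ∈ P.I j) (h' : x ∈ P.I j') : j = j' := by
  by_contra hne
  rcases lt_or_gt_of_ne hne with hlt | hlt
  · exact lt_irrefl x (P.ordered j j' hlt x h x h')
  · exact lt_irrefl x (P.ordered j' j hlt x h' x h)

lemma le_card (j : Fin P.t) : w ≤ (P.I j).card := by
  rcases P.size j with h | h <;> omega

lemma ordConnected_dropSmallest (j : Fin P.t) (ℓ : ℕ) :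
    (↑(dropSmallest (P.I j) ℓ) : Set ℕ).OrdConnected := by
  obtain ⟨a, b, -, -, -, hI⟩ := P.interval j
  have : (↑(dropSmallest (P.I j) ℓ) : Set ℕ) = Set.Icc (a + ℓ) b := by
    ext x
    rw [hI, Finset.mem_coe, mem_dropSmallest_Icc, Set.mem_Icc]
  exact this ▸ Set.ordConnected_Icc

lemma add_lt_of_lt {j j' : Fin P.t} (hjj' : j < j') {x y ℓ : ℕ} (hx : x ∈ P.I j)
    (hy : y ∈ dropSmallest (P.I j') ℓ) : x + ℓ < y := by
  obtain ⟨a, b, -, -, -, hI⟩ := P.interval j'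
  rw [hI, mem_dropSmallest_Icc] at hy
  have := P.ordered j j' hjj' x hx a (by rw [hI, Finset.mem_Icc]; omega)
  omega

lemma mem_sdiff_gridOf_iff {x : Fin d → ℕ} :
    x ∈ cube n d \ gridOf n d k w P ↔ ∀ i, ∃ j, x i ∈ dropSmallest (P.I j) (k - 1) := by
  constructor
  · rintro ⟨hx, hxG⟩ i
    obtain ⟨j, hj⟩ := P.cover (x i) (Finset.mem_Icc.2 (hx i))
    exact ⟨j, Finset.mem_sdiff.2 ⟨hj, fun h => hxG ⟨hx, i, j, h⟩⟩⟩
  · intro h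
    refine ⟨fun i => ?_, fun ⟨_, i, j', hj'⟩ => ?_⟩
    · obtain ⟨j, hj⟩ := h i
      obtain ⟨a, b, ha, -, hb, hI⟩ := P.interval j
      rw [dropSmallest, hI, Finset.mem_sdiff, Finset.mem_Icc] at hj
      omega
    · obtain ⟨j, hj⟩ := h i
      rw [dropSmallest, Finset.mem_sdiff] at hj
      obtain rfl := P.eq_of_mem_of_mem hj.1 (Finset.filter_subset _ _ hj')
      exact hj.2 hj'

lemma exists_mem_dropSmallest_of_window (hk : 1 ≤ k) (hP : ∀ j, k ≤ (P.I j).card) {c : ℕ}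
    (hc : 1 ≤ c) (hcn : c + k - 1 ≤ n) :
    ∃ m, c ≤ m ∧ m ≤ c + k - 1 ∧ ∃ j, m ∈ dropSmallest (P.I j) (k - 1) := by
  obtain ⟨j, hj⟩ := P.cover c (Finset.mem_Icc.2 ⟨hc, by omega⟩)
  obtain ⟨a, b, -, -, -, hI⟩ := P.interval j
  have hcard := hP j
  rw [hI, Nat.card_Icc] at hcard
  rw [hI, Finset.mem_Icc] at hj
  by_cases hca : a + (k - 1) ≤ c
  · exact ⟨c, le_rfl, by omega, j, by rw [hI, mem_dropSmallest_Icc]; omega⟩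
  · exact ⟨a + (k - 1), by omega, by omega, j, by rw [hI, mem_dropSmallest_Icc]; omega⟩

lemma exists_mem_kbox_sdiff_gridOf (hk : 1 ≤ k) (hP : ∀ j, k ≤ (P.I j).card)
    {a : Fin d → ℕ} (ha : ∀ i, 1 ≤ a i) (hbox : kbox d k a ⊆ cube n d) :
    ∃ z ∈ kbox d k a, z ∈ cube n d \ gridOf n d k w P := by
  have htop : ∀ i, a i + k - 1 ≤ n := by
    have hcorner : (fun i => a i + k - 1) ∈ kbox d k a := fun i => by dsimp only; omega
    exact fun i => (hbox hcorner i).2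
  choose m hcm hmc hm using fun i => P.exists_mem_dropSmallest_of_window hk hP (ha i) (htop i)
  exact ⟨m, fun i => ⟨hcm i, hmc i⟩, P.mem_sdiff_gridOf_iff.2 hm⟩

def cell (d k : ℕ) (j : Fin d → Fin P.t) : Set (Fin d → ℕ) :=
  Set.univ.pi fun i => ↑(dropSmallest (P.I (j i)) (k - 1))

variable {P}

lemma cell_subset (j : Fin d → Fin P.t) : P.cell d k j ⊆ cube n d \ gridOf n d k w P :=
  fun _ hx => P.mem_sdiff_gridOf_iff.2 fun i => ⟨j i, hx i trivial⟩

lemma exists_mem_cell {x : Fin d → ℕ} (hx : x ∈ cube n d \ gridOf n d k w P) :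
    ∃ j, x ∈ P.cell d k j := by
  choose j hj using P.mem_sdiff_gridOf_iff.1 hx
  exact ⟨j, fun i _ => hj i⟩

lemma mem_cell_of_dist_lt {j : Fin d → Fin P.t} {y z : Fin d → ℕ} (hy : y ∈ P.cell d k j)
    (hz : z ∈ cube n d \ gridOf n d k w P) (hdist : ∀ i, Nat.dist (z i) (y i) < k) :
    z ∈ P.cell d k j := by
  intro i _
  obtain ⟨j', hj'⟩ := P.mem_sdiff_gridOf_iff.1 hz i
  have hyi : y i ∈ dropSmallest (P.I (j i)) (k - 1) := hy i trivial
  have := hdist i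
  simp only [Nat.dist] at this
  rcases lt_trichotomy j' (j i) with hlt | rfl | hlt
  · have := P.add_lt_of_lt hlt (Finset.sdiff_subset hj') hyi
    omega
  · exact hj'
  · have := P.add_lt_of_lt hlt (Finset.sdiff_subset hyi) hj'
    omega

lemma cell_isBlock (hk : 2 ≤ k) {j : Fin d → Fin P.t} (hne : (P.cell d k j).Nonempty) :
    IsBlock n d (gridOf n d k w P) (P.cell d k j) := by
  refine ⟨hne, cell_subset j, fun x hx y hy => ?_, fun x hx y hy hxy => ?_⟩
  · refine ReflTransGen.mono ?_ _ _
      (reflTransGen_of_mem_pi (fun i => P.ordConnected_dropSmallest _ _) hx hy)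
    exact fun a b ⟨ha, hb, hab⟩ => ⟨cell_subset j ha, cell_subset j hb, hab⟩
  · refine mem_cell_of_dist_lt hx hy fun i => ?_
    have := dist_le_one_of_neighbor hxy i
    rw [Nat.dist_comm]
    omega

end IntervalPartition

namespace IsBlock

variable {G B : Set (Fin d → ℕ)}

lemma mem_of_reflTransGen (hB : IsBlock n d G B) {x y : Fin d → ℕ} (hx : x ∈ B)
    (hxy : ReflTransGen (fun a b => a ∈ cube n d \ G ∧ b ∈ cube n d \ G ∧ Neighbor a b) x y) :
    y ∈ B := by
  induction hxy with
  | refl => exact hx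
  | tail _ hbc ih => exact hB.2.2.2 _ ih _ hbc.2.1 hbc.2.2

lemma subset_of_mem {G' C : Set (Fin d → ℕ)} (hGG' : G ⊆ G') (hB : IsBlock n d G B)
    (hC : IsBlock n d G' C) {z : Fin d → ℕ} (hzB : z ∈ B) (hzC : z ∈ C) : C ⊆ B := by
  refine fun y hy => hB.mem_of_reflTransGen hzB (ReflTransGen.mono ?_ _ _ (hC.2.2.1 z hzC y hy))
  exact fun a b ⟨ha, hb, hab⟩ =>
    ⟨⟨ha.1, fun h => ha.2 (hGG' h)⟩, ⟨hb.1, fun h => hb.2 (hGG' h)⟩, hab⟩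

lemma eq_of_mem {C : Set (Fin d → ℕ)} (hB : IsBlock n d G B) (hC : IsBlock n d G C)
    {z : Fin d → ℕ} (hzB : z ∈ B) (hzC : z ∈ C) : B = C :=
  (hC.subset_of_mem subset_rfl hB hzC hzB).antisymm (hB.subset_of_mem subset_rfl hC hzB hzC)

variable {P : IntervalPartition n w}

lemma mem_of_mem_blockClosure (hk : 2 ≤ k) (hB : IsBlock n d (gridOf n d k w P) B)
    {z : Fin d → ℕ} (hz : z ∈ blockClosure n d k B) (hzG : z ∈ cube n d \ gridOf n d k w P) :
    z ∈ B := by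
  obtain ⟨-, y, hyB, hdist⟩ := hz
  obtain ⟨j, hyj⟩ := IntervalPartition.exists_mem_cell (hB.2.1 hyB)
  rw [hB.eq_of_mem (IntervalPartition.cell_isBlock hk ⟨y, hyj⟩) hyB hyj]
  exact IntervalPartition.mem_cell_of_dist_lt hyj hzG hdist

theorem exists_unrepairable_sub_block {w' : ℕ} {P' : IntervalPartition n w'} {σ : Type*}
    {F : Set ((Fin d → ℕ) → σ)} {A : (Fin d → ℕ) → σ} (hk : 2 ≤ k)
    (hP' : ∀ j, k ≤ (P'.I j).card) (hGG' : gridOf n d k w P ⊆ gridOf n d k w' P')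
    (hB : IsBlock n d (gridOf n d k w P) B) (hU : Unrepairable n d k F A B) :
    ∃ C, IsBlock n d (gridOf n d k w' P') C ∧ C ⊆ B ∧ Unrepairable n d k F A C := by
  by_contra! hcon
  simp only [Unrepairable, not_forall, exists_prop] at hcon
  have : Nonempty ((Fin d → ℕ) → σ) := ⟨A⟩
  choose! repair hrepair_eq hrepair_free using hcon
  obtain ⟨A', hA'_sub, hA'_out⟩ := exists_extend_of_pairwiseDisjoint
    (𝒞 := {C | IsBlock n d (gridOf n d k w' P') C ∧ C ⊆ B})
    (fun C hC C' hC' hne => Set.disjoint_left.2 fun x hxC hxC' =>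
      hne (hC.1.eq_of_mem hC'.1 hxC hxC')) repair A
  obtain ⟨a, ha, hcopy, hbox⟩ := hU A' fun x hx => hA'_out x fun C hC hxC => hx.2 (hC.2 hxC)
  have hbox_cube : kbox d k a ⊆ cube n d := hbox.trans fun _ hx => hx.1
  obtain ⟨z, hz_box, hz⟩ :=
    P'.exists_mem_kbox_sdiff_gridOf (by omega) hP' (fun i => (ha i).1) hbox_cube
  have hzB : z ∈ B := hB.mem_of_mem_blockClosure hk (hbox hz_box) ⟨hz.1, fun h => hz.2 (hGG' h)⟩
  obtain ⟨j, hzj⟩ := IntervalPartition.exists_mem_cell hz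
  have hC := IntervalPartition.cell_isBlock hk ⟨z, hzj⟩
  have hCB := hB.subset_of_mem hGG' hC hzB hzj
  have hA'_C : ∀ x ∈ blockClosure n d k (P'.cell d k j), A' x = repair (P'.cell d k j) x := by
    intro x hx
    by_cases hxC : x ∈ P'.cell d k j
    · exact hA'_sub _ ⟨hC, hCB⟩ x hxC
    · rw [hA'_out x fun C' hC' hxC' => hxC (hC.mem_of_mem_blockClosure hk hx (hC'.1.2.1 hxC'))]
      exact (hrepair_eq _ hC hCB x ⟨hx, hxC⟩).symm
  exact hrepair_free _ hC hCB
    (HasCopyIn.congr ⟨a, ha, hcopy, kbox_subset_blockClosure hbox_cube hz_box hzj⟩ hA'_C)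

end IsBlock

theorem unrepairable_sub_block_general (n d k w : ℕ) (hk : 2 ≤ k)
    (hkw : k ≤ w) (hwn : w ≤ n) {σ : Type*} (F : Set ((Fin d → ℕ) → σ))
    (A : (Fin d → ℕ) → σ) (S : GridSystem n d k w)
    (i' i : ℕ) (hii : i' < i) (hi : i ≤ sysR n w)
    (B : Set (Fin d → ℕ)) (hB : IsBlock n d (S.G i) B)
    (hU : Unrepairable n d k F A B) :
    ∃ B' : Set (Fin d → ℕ), IsBlock n d (S.G i') B' ∧ B' ⊆ B ∧
      Unrepairable n d k F A B' := by
  obtain ⟨P, hP⟩ := S.isGrid i hi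
  obtain ⟨P', hP'⟩ := S.isGrid i' (hii.le.trans hi)
  have hGG' := S.nested i i' hii.le hi
  rw [hP, hP'] at hGG'
  rw [hP] at hB
  rw [hP']
  have hcard : ∀ j, k ≤ (P'.I j).card := fun j =>
    hkw.trans ((le_div_two_pow_sysR_sub (by omega) hwn i').trans (P'.le_card j))
  exact hB.exists_unrepairable_sub_block hk hcard hGG' hU

/-- If a `G_i`-block is `(P,A)`-unrepairable, then for any `i' < i`
there is a `(P,A)`-unrepairable `G_{i'}`-block contained in it. -/
theorem unrepairable_sub_block (n d k w : ℕ) (hd : 1 ≤ d) (hk : 2 ≤ k)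
    (hkw : k ≤ w) (hwn : w ≤ n) {σ : Type*} (F : Set ((Fin d → ℕ) → σ))
    (A : (Fin d → ℕ) → σ) (S : GridSystem n d k w)
    (i' i : ℕ) (hii : i' < i) (hi : i ≤ sysR n w)
    (B : Set (Fin d → ℕ)) (hB : IsBlock n d (S.G i) B)
    (hU : Unrepairable n d k F A B) :
    ∃ B' : Set (Fin d → ℕ), IsBlock n d (S.G i') B' ∧ B' ⊆ B ∧
      Unrepairable n d k F A B' :=
  unrepairable_sub_block_general n d k w hk hkw hwn F A S i' i hii hi B hB hU
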